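/- arXiv:1301.4034 — 2 statements merged into one kernel-verified Lean document; each statement's English description precedes it below -/
import Mathlib

section
/- Let t > 0 and a < b, and let D = (0, t) × (a, b) × (−π/2, π/2) × (0, ∞). Then the injection map f_t restricted to D is an injective smooth map whose image f_t(D) is an open subset of ℝ⁴ and whose inverse is continuous on f_t(D). Consequently, for every finite Borel measure ν on D with ν absolutely continuous with respect to 4-dimensional Lebesgue measure λ₄, the pushforward (f_t)_*ν is absolutely continuous with respect to λ₄ on ℝ⁴; and if moreover ν has (λ₄-a.e.) strictly positive density on D, then (f_t)_*ν has strictly positive density λ₄-a.e. on the open set f_t(D). -/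
open MeasureTheory

/-- The injection map `f_t` sending injection data `(τ, ξ, δ, s)` to the position and
velocity `(x, y, v_x, v_y)` at time `t`. -/
noncomputable def injMap (t : ℝ) (p : Fin 4 → ℝ) : Fin 4 → ℝ :=
  ![(t - p 0) * p 3 * Real.cos (p 2),
    p 1 - (t - p 0) * p 3 * Real.sin (p 2),
    p 3 * Real.cos (p 2),
    -(p 3 * Real.sin (p 2))]

/-- The domain `D = (0, t) × (a, b) × (−π/2, π/2) × (0, ∞)` of injection parameters
`(τ, ξ, δ, s)`. -/
def injDomAB (t a b : ℝ) : Set (Fin 4 → ℝ) :=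
  {p | 0 < p 0 ∧ p 0 < t ∧ a < p 1 ∧ p 1 < b ∧
       -(Real.pi / 2) < p 2 ∧ p 2 < Real.pi / 2 ∧ 0 < p 3}

noncomputable def injJac (t : ℝ) (p : Fin 4 → ℝ) : Matrix (Fin 4) (Fin 4) ℝ :=
  ![![-(p 3 * Real.cos (p 2)), 0, -((t - p 0) * p 3 * Real.sin (p 2)), (t - p 0) * Real.cos (p 2)],
    ![p 3 * Real.sin (p 2), 1, -((t - p 0) * p 3 * Real.cos (p 2)), -((t - p 0) * Real.sin (p 2))],
    ![0, 0, -(p 3 * Real.sin (p 2)), Real.cos (p 2)],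
    ![0, 0, -(p 3 * Real.cos (p 2)), -Real.sin (p 2)]]

noncomputable def injDer (t : ℝ) (p : Fin 4 → ℝ) : (Fin 4 → ℝ) →L[ℝ] (Fin 4 → ℝ) :=
  LinearMap.toContinuousLinearMap (Matrix.toLin' (injJac t p))

theorem injDer_det (t : ℝ) (p : Fin 4 → ℝ) :
    (injDer t p).det = -(p 3 ^ 2 * Real.cos (p 2)) := by
  have : (injDer t p).det = (injJac t p).det := by
    rw [ContinuousLinearMap.det]
    rw [show ((injDer t p) : (Fin 4 → ℝ) →ₗ[ℝ] (Fin 4 → ℝ)) = Matrix.toLin' (injJac t p) from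
      LinearMap.coe_toContinuousLinearMap _]
    exact LinearMap.det_toLin' _
  rw [this]
  rw [Matrix.det_succ_row_zero]
  simp [Matrix.det_succ_row_zero, Fin.sum_univ_succ, injJac, Matrix.submatrix, Matrix.of_apply]
  ring_nf
  linear_combination p 3 ^ 2 * Real.cos (p 2) * Real.sin_sq_add_cos_sq (p 2)

theorem injDer_apply (t : ℝ) (p v : Fin 4 → ℝ) (i : Fin 4) :
    injDer t p v i = ∑ j, injJac t p i j * v j := by
  simp [injDer, Matrix.toLin'_apply, Matrix.mulVec, dotProduct]

theorem hasFDerivAt_injMap (t : ℝ) (p : Fin 4 → ℝ) :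
    HasFDerivAt (injMap t) (injDer t p) p := by
  rw [hasFDerivAt_pi']
  have hp : ∀ i : Fin 4, HasFDerivAt (fun q : Fin 4 → ℝ => q i)
      (ContinuousLinearMap.proj i : (Fin 4 → ℝ) →L[ℝ] ℝ) p :=
    fun i => hasFDerivAt_apply i p
  have hsub : HasFDerivAt (fun q : Fin 4 → ℝ => t - q 0)
      ((0 : (Fin 4 → ℝ) →L[ℝ] ℝ) - ContinuousLinearMap.proj 0) p :=
    (hasFDerivAt_const t p).sub (hp 0)
  have hmul : HasFDerivAt (fun q : Fin 4 → ℝ => (t - q 0) * q 3)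
      ((t - p 0) • (ContinuousLinearMap.proj 3 : (Fin 4 → ℝ) →L[ℝ] ℝ) +
        p 3 • ((0 : (Fin 4 → ℝ) →L[ℝ] ℝ) - ContinuousLinearMap.proj 0)) p :=
    hsub.mul (hp 3)
  have hcos : HasFDerivAt (fun q : Fin 4 → ℝ => Real.cos (q 2))
      ((-Real.sin (p 2)) • (ContinuousLinearMap.proj 2 : (Fin 4 → ℝ) →L[ℝ] ℝ)) p :=
    (Real.hasDerivAt_cos (p 2)).comp_hasFDerivAt (f := fun q : Fin 4 → ℝ => q 2) p (hp 2)
  have hsin : HasFDerivAt (fun q : Fin 4 → ℝ => Real.sin (q 2))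
      ((Real.cos (p 2)) • (ContinuousLinearMap.proj 2 : (Fin 4 → ℝ) →L[ℝ] ℝ)) p :=
    (Real.hasDerivAt_sin (p 2)).comp_hasFDerivAt (f := fun q : Fin 4 → ℝ => q 2) p (hp 2)
  intro i
  fin_cases i
  · have h := hmul.mul hcos
    refine h.congr_fderiv ?_
    ext v
    simp [injDer_apply, Fin.sum_univ_four, injJac, smul_eq_mul, injMap]
    ring
  · have h := (hp 1).sub (hmul.mul hsin)
    refine h.congr_fderiv ?_
    ext v
    simp [injDer_apply, Fin.sum_univ_four, injJac, smul_eq_mul, injMap]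
    ring
  · have h := (hp 3).mul hcos
    refine h.congr_fderiv ?_
    ext v
    simp [injDer_apply, Fin.sum_univ_four, injJac, smul_eq_mul, injMap]
    ring
  · have h := ((hp 3).mul hsin).neg
    refine h.congr_fderiv ?_
    ext v
    simp [injDer_apply, Fin.sum_univ_four, injJac, smul_eq_mul, injMap]
    ring

noncomputable def injInv (t : ℝ) (q : Fin 4 → ℝ) : Fin 4 → ℝ :=
  ![t - q 0 / q 2, q 1 - q 0 * q 3 / q 2, Real.arctan (-(q 3) / q 2),
    Real.sqrt (q 2 ^ 2 + q 3 ^ 2)]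

def injTgt (t a b : ℝ) : Set (Fin 4 → ℝ) :=
  {q | 0 < q 2 ∧ 0 < q 0 ∧ q 0 < t * q 2 ∧ a * q 2 < q 1 * q 2 - q 0 * q 3 ∧
       q 1 * q 2 - q 0 * q 3 < b * q 2}

theorem injInv_leftInv (t a b : ℝ) {p : Fin 4 → ℝ} (hp : p ∈ injDomAB t a b) :
    injInv t (injMap t p) = p := by
  obtain ⟨h0, h1, h2, h3, h4, h5, h6⟩ := hp
  have hc : 0 < Real.cos (p 2) := Real.cos_pos_of_mem_Ioo ⟨h4, h5⟩
  have hsc : p 3 * Real.cos (p 2) ≠ 0 := by positivity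
  funext i
  fin_cases i <;>
    simp only [Fin.isValue, injInv, injMap, Matrix.cons_val_zero, Matrix.cons_val_one, Matrix.head_cons,
      Matrix.cons_val_two, Matrix.tail_cons, Matrix.cons_val_three]
  · field_simp
    simp
  · field_simp
    simp
  · rw [show -(-(p 3 * Real.sin (p 2))) / (p 3 * Real.cos (p 2)) = Real.tan (p 2) by
      rw [Real.tan_eq_sin_div_cos]; field_simp]
    exact Real.arctan_tan h4 h5
  · rw [show (p 3 * Real.cos (p 2)) ^ 2 + (-(p 3 * Real.sin (p 2))) ^ 2 = p 3 ^ 2 by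
      nlinarith [Real.sin_sq_add_cos_sq (p 2)]]
    exact Real.sqrt_sq h6.le

theorem injMap_image_eq (t a b : ℝ) (ht : 0 < t) :
    injMap t '' injDomAB t a b = injTgt t a b := by
  apply Set.Subset.antisymm
  · rintro q ⟨p, hp, rfl⟩
    obtain ⟨h0, h1, h2, h3, h4, h5, h6⟩ := hp
    have hc : 0 < Real.cos (p 2) := Real.cos_pos_of_mem_Ioo ⟨h4, h5⟩
    have htτ : 0 < t - p 0 := by linarith
    simp only [injTgt, injMap, Set.mem_setOf_eq, Matrix.cons_val_zero, Matrix.cons_val_one,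
      Matrix.head_cons, Matrix.cons_val_two, Matrix.tail_cons, Matrix.cons_val_three]
    refine ⟨by positivity, by positivity, ?_, ?_, ?_⟩
    · nlinarith [mul_pos (mul_pos h0 h6) hc]
    · nlinarith [mul_pos (mul_pos (sub_pos.2 h2) h6) hc]
    · nlinarith [mul_pos (mul_pos (sub_pos.2 h3) h6) hc]
  · rintro q ⟨hq2, hq0, hq1, hqa, hqb⟩
    refine ⟨injInv t q, ?_, ?_⟩
    · have h1 : 0 < q 0 / q 2 := by positivity
      have h2 : q 0 / q 2 < t := by rw [div_lt_iff₀ hq2]; linarith [hq1]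
      refine ⟨by simp [injInv]; linarith, by simp [injInv]; linarith, ?_, ?_, ?_, ?_, ?_⟩
      · simp only [injInv, Matrix.cons_val_one, Matrix.head_cons, Matrix.cons_val_zero]
        have e : q 1 - q 0 * q 3 / q 2 = (q 1 * q 2 - q 0 * q 3) / q 2 := by
          field_simp
        rw [e, lt_div_iff₀ hq2]
        exact hqa
      · simp only [injInv, Matrix.cons_val_one, Matrix.head_cons, Matrix.cons_val_zero]
        have e : q 1 - q 0 * q 3 / q 2 = (q 1 * q 2 - q 0 * q 3) / q 2 := by
          field_simp
        rw [e, div_lt_iff₀ hq2]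
        exact hqb
      · simpa [injInv] using Real.neg_pi_div_two_lt_arctan _
      · simpa [injInv] using Real.arctan_lt_pi_div_two _
      · simp only [injInv, Matrix.cons_val_three, Matrix.cons_val_two, Matrix.tail_cons,
          Matrix.head_cons]
        positivity
    · have hr : 0 < Real.sqrt (q 2 ^ 2 + q 3 ^ 2) := Real.sqrt_pos.2 (by positivity)
      have h1pu : 1 + (-(q 3) / q 2) ^ 2 = (q 2 ^ 2 + q 3 ^ 2) / q 2 ^ 2 := by
        field_simp
      have hsq : Real.sqrt (1 + (-(q 3) / q 2) ^ 2) = Real.sqrt (q 2 ^ 2 + q 3 ^ 2) / q 2 := by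
        rw [h1pu, Real.sqrt_div (by positivity), Real.sqrt_sq hq2.le]
      have hcos : Real.sqrt (q 2 ^ 2 + q 3 ^ 2) * Real.cos (Real.arctan (-(q 3) / q 2)) = q 2 := by
        rw [Real.cos_arctan, hsq]
        field_simp
      have hsin : Real.sqrt (q 2 ^ 2 + q 3 ^ 2) * Real.sin (Real.arctan (-(q 3) / q 2)) = -(q 3) := by
        rw [Real.sin_arctan, hsq, div_div_div_cancel_right₀]
        · field_simp
        · exact hq2.ne'
      have e0 : injMap t (injInv t q) 0 = q 0 := by
        simp only [injMap, injInv, Matrix.cons_val_zero, Matrix.cons_val_one, Matrix.head_cons,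
          Matrix.cons_val_two, Matrix.tail_cons, Matrix.cons_val_three]
        rw [show t - (t - q 0 / q 2) = q 0 / q 2 by ring, mul_assoc, hcos]
        field_simp
      have e1 : injMap t (injInv t q) 1 = q 1 := by
        simp only [injMap, injInv, Matrix.cons_val_zero, Matrix.cons_val_one, Matrix.head_cons,
          Matrix.cons_val_two, Matrix.tail_cons, Matrix.cons_val_three]
        rw [show t - (t - q 0 / q 2) = q 0 / q 2 by ring, mul_assoc, hsin]
        field_simp
        ring
      have e2 : injMap t (injInv t q) 2 = q 2 := by
        simp only [injMap, injInv, Matrix.cons_val_zero, Matrix.cons_val_one, Matrix.head_cons,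
          Matrix.cons_val_two, Matrix.tail_cons, Matrix.cons_val_three]
        exact hcos
      have e3 : injMap t (injInv t q) 3 = q 3 := by
        simp only [injMap, injInv, Matrix.cons_val_zero, Matrix.cons_val_one, Matrix.head_cons,
          Matrix.cons_val_two, Matrix.tail_cons, Matrix.cons_val_three]
        rw [hsin]
        ring
      funext i
      fin_cases i
      · exact e0
      · exact e1
      · exact e2
      · exact e3

theorem contDiff_injMap (t : ℝ) : ContDiff ℝ (⊤ : ℕ∞) (injMap t) := by
  have hproj : ∀ i : Fin 4, ContDiff ℝ (⊤ : ℕ∞) (fun p : Fin 4 → ℝ => p i) := fun i =>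
    (ContinuousLinearMap.proj i : (Fin 4 → ℝ) →L[ℝ] ℝ).contDiff
  rw [contDiff_pi]
  intro i
  fin_cases i <;>
    simp only [injMap, Matrix.cons_val_zero, Matrix.cons_val_one, Matrix.head_cons,
      Matrix.cons_val_two, Matrix.tail_cons, Matrix.cons_val_three]
  · exact ((contDiff_const.sub (hproj 0)).mul (hproj 3)).mul (Real.contDiff_cos.comp (hproj 2))
  · exact (hproj 1).sub (((contDiff_const.sub (hproj 0)).mul (hproj 3)).mul
      (Real.contDiff_sin.comp (hproj 2)))
  · exact (hproj 3).mul (Real.contDiff_cos.comp (hproj 2))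
  · exact ((hproj 3).mul (Real.contDiff_sin.comp (hproj 2))).neg

theorem isOpen_injTgt (t a b : ℝ) : IsOpen (injTgt t a b) := by
  have hc : ∀ i : Fin 4, Continuous (fun q : Fin 4 → ℝ => q i) := fun i => continuous_apply i
  have h1 : IsOpen {q : Fin 4 → ℝ | 0 < q 2} := isOpen_lt continuous_const (hc 2)
  have h2 : IsOpen {q : Fin 4 → ℝ | 0 < q 0} := isOpen_lt continuous_const (hc 0)
  have h3 : IsOpen {q : Fin 4 → ℝ | q 0 < t * q 2} :=
    isOpen_lt (hc 0) (continuous_const.mul (hc 2))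
  have h4 : IsOpen {q : Fin 4 → ℝ | a * q 2 < q 1 * q 2 - q 0 * q 3} :=
    isOpen_lt (continuous_const.mul (hc 2)) (((hc 1).mul (hc 2)).sub ((hc 0).mul (hc 3)))
  have h5 : IsOpen {q : Fin 4 → ℝ | q 1 * q 2 - q 0 * q 3 < b * q 2} :=
    isOpen_lt (((hc 1).mul (hc 2)).sub ((hc 0).mul (hc 3))) (continuous_const.mul (hc 2))
  have : injTgt t a b = {q : Fin 4 → ℝ | 0 < q 2} ∩ ({q | 0 < q 0} ∩ ({q | q 0 < t * q 2} ∩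
      ({q | a * q 2 < q 1 * q 2 - q 0 * q 3} ∩ {q | q 1 * q 2 - q 0 * q 3 < b * q 2}))) := by
    ext q; simp [injTgt, Set.mem_setOf_eq, and_assoc]
  rw [this]
  exact h1.inter (h2.inter (h3.inter (h4.inter h5)))

theorem continuousOn_injInv (t a b : ℝ) : ContinuousOn (injInv t) (injTgt t a b) := by
  have hc : ∀ i : Fin 4, Continuous (fun q : Fin 4 → ℝ => q i) := fun i => continuous_apply i
  have hne : ∀ q ∈ injTgt t a b, q 2 ≠ 0 := fun q hq => hq.1.ne'
  apply continuousOn_pi.2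
  intro i
  fin_cases i <;>
    simp only [injInv, Matrix.cons_val_zero, Matrix.cons_val_one, Matrix.head_cons,
      Matrix.cons_val_two, Matrix.tail_cons, Matrix.cons_val_three]
  · exact continuousOn_const.sub (((hc 0).continuousOn).div ((hc 2).continuousOn) hne)
  · exact ((hc 1).continuousOn).sub
      ((((hc 0).mul (hc 3)).continuousOn).div ((hc 2).continuousOn) hne)
  · exact (Real.continuous_arctan.comp_continuousOn
      (((hc 3).neg.continuousOn).div ((hc 2).continuousOn) hne))
  · exact (Real.continuous_sqrt.comp (((hc 2).pow 2).add ((hc 3).pow 2))).continuousOn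

theorem injOn_injMap (t a b : ℝ) : Set.InjOn (injMap t) (injDomAB t a b) := by
  intro p hp q hq h
  rw [← injInv_leftInv t a b hp, ← injInv_leftInv t a b hq, h]

theorem measurableSet_injDomAB (t a b : ℝ) : MeasurableSet (injDomAB t a b) := by
  have hc : ∀ i : Fin 4, Measurable (fun q : Fin 4 → ℝ => q i) := fun i => measurable_pi_apply i
  exact (measurableSet_lt measurable_const (hc 0)).inter
    ((measurableSet_lt (hc 0) measurable_const).inter
    ((measurableSet_lt measurable_const (hc 1)).inter
    ((measurableSet_lt (hc 1) measurable_const).inter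
    ((measurableSet_lt measurable_const (hc 2)).inter
    ((measurableSet_lt (hc 2) measurable_const).inter
    (measurableSet_lt measurable_const (hc 3)))))))

theorem injMap_cov (t a b : ℝ) {A : Set (Fin 4 → ℝ)} (hA : MeasurableSet A)
    (hAD : A ⊆ injDomAB t a b) :
    volume (injMap t '' A) =
      ∫⁻ p in A, ENNReal.ofReal (p 3 ^ 2 * Real.cos (p 2)) ∂volume := by
  have h := lintegral_image_eq_lintegral_abs_det_fderiv_mul (volume : Measure (Fin 4 → ℝ)) hA
    (fun p _ => (hasFDerivAt_injMap t p).hasFDerivWithinAt)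
    ((injOn_injMap t a b).mono hAD) (fun _ => 1)
  simp only [lintegral_const, one_mul, mul_one] at h
  rw [Measure.restrict_apply MeasurableSet.univ, Set.univ_inter] at h
  rw [h]
  apply setLIntegral_congr_fun hA
  intro p hp
  obtain ⟨-, -, -, -, h4, h5, h6⟩ := hAD hp
  have hc : 0 < Real.cos (p 2) := Real.cos_pos_of_mem_Ioo ⟨h4, h5⟩
  dsimp only
  rw [injDer_det, abs_neg, abs_of_nonneg (by positivity)]

theorem injMap_image_null (t a b : ℝ) {A : Set (Fin 4 → ℝ)} (hA : MeasurableSet A)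
    (hAD : A ⊆ injDomAB t a b) (h0 : volume A = 0) : volume (injMap t '' A) = 0 := by
  rw [injMap_cov t a b hA hAD, setLIntegral_measure_zero _ _ h0]

theorem injMap_preimage_null (t a b : ℝ) {A : Set (Fin 4 → ℝ)} (hA : MeasurableSet A)
    (hAD : A ⊆ injDomAB t a b) (h0 : volume (injMap t '' A) = 0) : volume A = 0 := by
  rw [injMap_cov t a b hA hAD] at h0
  have hmeas : Measurable (fun p : Fin 4 → ℝ => ENNReal.ofReal (p 3 ^ 2 * Real.cos (p 2))) := by
    apply ENNReal.measurable_ofReal.comp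
    exact ((measurable_pi_apply 3).pow_const 2).mul (Real.continuous_cos.measurable.comp
      (measurable_pi_apply 2))
  have hz := (lintegral_eq_zero_iff hmeas).1 h0
  have hmem := ae_restrict_mem (μ := (volume : Measure (Fin 4 → ℝ))) hA
  have : ∀ᵐ p ∂(volume.restrict A), False := by
    filter_upwards [hz, hmem] with p hp1 hp2
    obtain ⟨-, -, -, -, h4, h5, h6⟩ := hAD hp2
    have hc : 0 < Real.cos (p 2) := Real.cos_pos_of_mem_Ioo ⟨h4, h5⟩
    have : (0:ENNReal) < ENNReal.ofReal (p 3 ^ 2 * Real.cos (p 2)) := ENNReal.ofReal_pos.2 (by positivity)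
    simp only [Pi.zero_apply] at hp1
    exact this.ne' hp1
  have h := ae_iff.1 this
  simp only [not_false_iff, Set.setOf_true] at h
  rw [← Measure.restrict_apply_univ]
  exact h

/-- For `t > 0` and `a < b`, the injection map restricted to
`D = (0,t) × (a,b) × (−π/2,π/2) × (0,∞)` is an injective smooth map whose image is open
and whose inverse is continuous on the image.  Consequently, any finite Borel measure `ν`
supported on `D` that is absolutely continuous with respect to `4`-dimensional Lebesgue
measure pushes forward under `f_t` to a measure absolutely continuous with respect to
Lebesgue measure, and if `ν` has a.e. strictly positive density on `D` then the
pushforward has a.e. strictly positive density on the open set `f_t(D)`. -/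
theorem injMap_image_density (t a b : ℝ) (ht : 0 < t) (hab : a < b) :
    Set.InjOn (injMap t) (injDomAB t a b) ∧
    ContDiffOn ℝ (⊤ : ℕ∞) (injMap t) (injDomAB t a b) ∧
    IsOpen (injMap t '' injDomAB t a b) ∧
    (∃ g : (Fin 4 → ℝ) → (Fin 4 → ℝ),
      ContinuousOn g (injMap t '' injDomAB t a b) ∧
      ∀ p ∈ injDomAB t a b, g (injMap t p) = p) ∧
    (∀ ν : Measure (Fin 4 → ℝ), IsFiniteMeasure ν → ν (injDomAB t a b)ᶜ = 0 →
      ν ≪ (volume : Measure (Fin 4 → ℝ)) →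
      (ν.map (injMap t) ≪ (volume : Measure (Fin 4 → ℝ)) ∧
        ((∀ᵐ p ∂(volume.restrict (injDomAB t a b)), 0 < ν.rnDeriv volume p) →
          ∀ᵐ q ∂(volume.restrict (injMap t '' injDomAB t a b)),
            0 < (ν.map (injMap t)).rnDeriv volume q))) := by
  have himg := injMap_image_eq t a b ht
  have hf : Measurable (injMap t) := (contDiff_injMap t).continuous.measurable
  have hD := measurableSet_injDomAB t a b
  have hT : MeasurableSet (injTgt t a b) := (isOpen_injTgt t a b).measurableSet
  refine ⟨injOn_injMap t a b, (contDiff_injMap t).contDiffOn, ?_, ?_, ?_⟩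
  · rw [himg]; exact isOpen_injTgt t a b
  · exact ⟨injInv t, by rw [himg]; exact continuousOn_injInv t a b,
      fun p hp => injInv_leftInv t a b hp⟩
  · intro ν hfin hcomp hac
    haveI := hfin
    constructor
    · refine Measure.AbsolutelyContinuous.mk (fun s hs hμs => ?_)
      rw [Measure.map_apply hf hs]
      have hsub : injMap t ⁻¹' s ⊆ (injMap t ⁻¹' s ∩ injDomAB t a b) ∪ (injDomAB t a b)ᶜ := by
        intro x hx
        by_cases h : x ∈ injDomAB t a b
        · exact Or.inl ⟨hx, h⟩
        · exact Or.inr h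
      refine measure_mono_null hsub (measure_union_null ?_ hcomp)
      apply hac
      apply injMap_preimage_null t a b ((hf hs).inter hD) Set.inter_subset_right
      exact measure_mono_null (Set.image_subset_iff.2
        (Set.inter_subset_left.trans (subset_refl _))) hμs
    · intro hpos
      set m := ν.map (injMap t) with hm
      haveI : IsFiniteMeasure m := by
        constructor
        rw [hm, Measure.map_apply hf MeasurableSet.univ]
        exact measure_lt_top ν _
      set Z := injTgt t a b ∩ (m.rnDeriv volume) ⁻¹' {0} with hZ
      have hZm : MeasurableSet Z :=
        hT.inter ((Measure.measurable_rnDeriv m volume) (measurableSet_singleton 0))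
      have hmac : m ≪ volume := by
        refine Measure.AbsolutelyContinuous.mk (fun s hs hμs => ?_)
        rw [hm, Measure.map_apply hf hs]
        have hsub : injMap t ⁻¹' s ⊆ (injMap t ⁻¹' s ∩ injDomAB t a b) ∪ (injDomAB t a b)ᶜ := by
          intro x hx
          by_cases h : x ∈ injDomAB t a b
          · exact Or.inl ⟨hx, h⟩
          · exact Or.inr h
        refine measure_mono_null hsub (measure_union_null ?_ hcomp)
        apply hac
        apply injMap_preimage_null t a b ((hf hs).inter hD) Set.inter_subset_right
        exact measure_mono_null (Set.image_subset_iff.2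
          (Set.inter_subset_left.trans (subset_refl _))) hμs
      have hmZ0 : m Z = 0 := by
        rw [← Measure.setLIntegral_rnDeriv hmac Z]
        rw [setLIntegral_congr_fun hZm (fun q hq => hq.2)]
        simp
      have hνS : ν (injMap t ⁻¹' Z ∩ injDomAB t a b) = 0 := by
        apply measure_mono_null Set.inter_subset_left
        rw [← Measure.map_apply hf hZm]
        exact hmZ0
      have hSm : MeasurableSet (injMap t ⁻¹' Z ∩ injDomAB t a b) := (hf hZm).inter hD
      have hvolS : volume (injMap t ⁻¹' Z ∩ injDomAB t a b) = 0 := by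
        have hint : ∫⁻ p in injMap t ⁻¹' Z ∩ injDomAB t a b, ν.rnDeriv volume p ∂volume = 0 := by
          rw [Measure.setLIntegral_rnDeriv hac]
          exact hνS
        have hz := (lintegral_eq_zero_iff (Measure.measurable_rnDeriv ν volume)).1 hint
        have hpos' := ae_restrict_of_ae_restrict_of_subset
          (Set.inter_subset_right :
            injMap t ⁻¹' Z ∩ injDomAB t a b ⊆ injDomAB t a b) hpos
        have hfalse : ∀ᵐ p ∂(volume.restrict (injMap t ⁻¹' Z ∩ injDomAB t a b)), False := by
          filter_upwards [hz, hpos'] with p h1 h2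
          simp only [Pi.zero_apply] at h1
          exact h2.ne' h1
        have h := ae_iff.1 hfalse
        simp only [not_false_iff, Set.setOf_true] at h
        rw [← Measure.restrict_apply_univ]
        exact h
      have hvolZ : volume Z = 0 := by
        apply measure_mono_null ?_ (injMap_image_null t a b hSm Set.inter_subset_right hvolS)
        intro q hq
        have hq' : q ∈ injMap t '' injDomAB t a b := himg ▸ hq.1
        obtain ⟨p, hp, rfl⟩ := hq'
        exact ⟨p, ⟨hq, hp⟩, rfl⟩
      rw [himg, ae_restrict_iff' hT, ae_iff]
      refine measure_mono_null ?_ hvolZ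
      intro q hq
      simp only [Set.mem_setOf_eq, not_forall] at hq
      obtain ⟨hq1, hq2⟩ := hq
      refine ⟨hq1, ?_⟩
      simp only [Set.mem_preimage, Set.mem_singleton_iff]
      simpa [pos_iff_ne_zero, not_not] using hq2
end

section
/- Let R > 0 and let t, τ, θ, ω, x, y, v_x, v_y be real numbers. Set v_t = v_x sin θ − v_y cos θ and v_⊥ = −(v_x cos θ + v_y sin θ), and assume v_⊥ ≠ 0 and R ω ≠ v_t. Then the two vectors in ℝ⁴, r₁ = ((ω − v_t/R)/v_⊥)·(cos θ, sin θ, τ cos θ, τ sin θ) + ((t − τ)/R²)·(−v_y, v_x, y, −x) and r₂ = (1/R²)·(−v_y, v_x, y, −x), are linearly independent; that is, the 2 × 4 derivative matrix of the map taking the particle's initial condition to the disk's angular position and angular velocity at time t has rank 2 away from the set where R ω = v_t. -/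
/-!
Both gradients are combinations of `u = (cos θ, sin θ, τ cos θ, τ sin θ)` and
`w = (-v_y, v_x, y, -x)`: `r₁ = c u + d w` and `r₂ = R⁻² w` with `c = (ω - v_t/R)/v_⊥ ≠ 0`.
This change of basis is triangular with nonzero diagonal, so it suffices that `u` and `w`
are independent, which their first two coordinates show: that `2 × 2` minor is `-v_⊥ ≠ 0`.
-/

theorem linearIndependent_pair_of_minor_ne_zero {K ι : Type*} [Field K] {u w : ι → K}
    (i j : ι) (h : u i * w j - u j * w i ≠ 0) : LinearIndependent K ![u, w] := by
  rw [LinearIndependent.pair_iff]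
  intro s t hst
  have hi : s * u i + t * w i = 0 := by simpa using congrFun hst i
  have hj : s * u j + t * w j = 0 := by simpa using congrFun hst j
  have hs : s * (u i * w j - u j * w i) = 0 := by linear_combination w j * hi - w i * hj
  have ht : t * (u i * w j - u j * w i) = 0 := by linear_combination u i * hj - u j * hi
  exact ⟨(mul_eq_zero.mp hs).resolve_right h, (mul_eq_zero.mp ht).resolve_right h⟩

theorem LinearIndependent.pair_triangular {K M : Type*} [Field K] [AddCommGroup M] [Module K M]
    {u w : M} (huw : LinearIndependent K ![u, w]) {c e : K} (d : K) (hc : c ≠ 0) (he : e ≠ 0) :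
    LinearIndependent K ![c • u + d • w, e • w] := by
  rw [LinearIndependent.pair_iff] at huw ⊢
  intro a b hab
  have hcoeffs := huw (a * c) (a * d + b * e) (by rw [← hab]; module)
  have ha : a = 0 := (mul_eq_zero.mp hcoeffs.1).resolve_right hc
  refine ⟨ha, ?_⟩
  simpa [ha, he] using hcoeffs.2

/-- Away from the degenerate set `R ω = v_t`, the two gradient vectors of the disk's
angular position and angular velocity at time `t`, with respect to the particle's initial
data `(x, y, v_x, v_y)`, are linearly independent; i.e. the `2 × 4` derivative matrix has
rank `2`. -/
theorem gradient_vectors_linearIndependent (R t τ θ ω x y vx vy : ℝ) (hR : 0 < R)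
    (hperp : -(vx * Real.cos θ + vy * Real.sin θ) ≠ 0)
    (hω : R * ω ≠ vx * Real.sin θ - vy * Real.cos θ) :
    let vt := vx * Real.sin θ - vy * Real.cos θ
    let vperp := -(vx * Real.cos θ + vy * Real.sin θ)
    let r₁ : Fin 4 → ℝ := fun i =>
      ((ω - vt / R) / vperp) *
          (![Real.cos θ, Real.sin θ, τ * Real.cos θ, τ * Real.sin θ] i) +
        ((t - τ) / R ^ 2) * (![-vy, vx, y, -x] i)
    let r₂ : Fin 4 → ℝ := fun i => (1 / R ^ 2) * (![-vy, vx, y, -x] i)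
    LinearIndependent ℝ ![r₁, r₂] := by
  intro vt vperp r₁ r₂
  have huw : LinearIndependent ℝ ![![Real.cos θ, Real.sin θ, τ * Real.cos θ, τ * Real.sin θ],
      ![-vy, vx, y, -x]] :=
    linearIndependent_pair_of_minor_ne_zero 0 1 fun h => hperp (by
      simp only [Matrix.cons_val] at h; linear_combination -h)
  have hc : (ω - vt / R) / vperp ≠ 0 := by
    refine div_ne_zero (sub_ne_zero.mpr fun h => hω ?_) hperp
    rw [h, mul_div_cancel₀ _ hR.ne']
  exact huw.pair_triangular ((t - τ) / R ^ 2) hc (by positivity)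
end
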